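/- arXiv:math/0606647 — 8 statements merged into one kernel-verified Lean document; each statement's English description precedes it below -/
import Mathlib

section
/- (Triangulated Wakamatsu's Lemma) Suppose α : A → X is a 𝒞-cover, and complete α to a distinguished triangle K → A --α--> X → ΣK in 𝒯. Then Hom(C, ΣK) = 0 for every object C of 𝒞. -/
open CategoryTheory CategoryTheory.Limits CategoryTheory.Pretriangulated

universe v u

variable {k : Type} [Field k]
variable {T : Type u} [Category.{v} T] [Preadditive T] [Linear k T]
  [HasZeroObject T] [HasShift T ℤ] [∀ n : ℤ, (shiftFunctor T n).Additive]
  [Pretriangulated T]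

/-- `α : A ⟶ X` is an `S`-precover of `X`: `A` lies in `S` and every morphism from an
object of `S` to `X` factors through `α`. -/
def IsPrecover (S : Set T) {A X : T} (α : A ⟶ X) : Prop :=
  A ∈ S ∧ ∀ A' : T, A' ∈ S → ∀ f : A' ⟶ X, ∃ g : A' ⟶ A, g ≫ α = f

/-- `α : A ⟶ X` is an `S`-cover: a right-minimal `S`-precover. -/
def IsCover (S : Set T) {A X : T} (α : A ⟶ X) : Prop :=
  IsPrecover S α ∧ ∀ f : A ⟶ A, f ≫ α = α → IsIso f

/-!
Given `φ : C ⟶ ΣK` with `C ∈ 𝒞`, form the extension `A ⟶ B ⟶ C ⟶ ΣA` classified by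
`-(Σf ∘ φ)`; its middle term `B` lies in `𝒞`. The pair `(𝟙 A, φ)` extends to a morphism of
triangles, so `α` factors through `A ⟶ B`; since `B ⟶ X` factors back through the precover `α`,
right minimality makes `A ⟶ B` a split mono, the extension splits and `Σf ∘ φ = 0`. Hence `φ`
factors through `X ⟶ ΣK`, and then through `α`, which kills it.
-/

variable {S : Set T} {K A X : T} {α : A ⟶ X}

lemma IsPrecover.comp_mor₃_eq_zero (hα : IsPrecover S α) {f : K ⟶ A} {h : X ⟶ K⟦(1 : ℤ)⟧}
    (htri : Triangle.mk f α h ∈ distTriang T) {C : T} (hC : C ∈ S) (g : C ⟶ X) :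
    g ≫ h = 0 := by
  obtain ⟨g', rfl⟩ := hα.2 C hC g
  have hαh : α ≫ h = 0 := comp_distTriang_mor_zero₂₃ _ htri
  rw [Category.assoc, hαh, comp_zero]

omit [Preadditive T] [HasZeroObject T] [HasShift T ℤ]
  [∀ n : ℤ, (shiftFunctor T n).Additive] [Pretriangulated T] in
lemma IsCover.mono_of_fac (hα : IsCover S α) {B : T} (hB : B ∈ S) (i : A ⟶ B) (β : B ⟶ X)
    (hfac : i ≫ β = α) : Mono i := by
  obtain ⟨γ, hγ⟩ := hα.1.2 B hB β
  have : IsIso (i ≫ γ) := hα.2 _ (by rw [Category.assoc, hγ, hfac])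
  exact mono_of_mono i γ

lemma IsCover.comp_shift_map_eq_zero (hα : IsCover S α) {f : K ⟶ A} {h : X ⟶ K⟦(1 : ℤ)⟧}
    (htri : Triangle.mk f α h ∈ distTriang T) {B C : T} {i : A ⟶ B} {p : B ⟶ C}
    {φ : C ⟶ K⟦(1 : ℤ)⟧} (hext : Triangle.mk i p (-(φ ≫ f⟦(1 : ℤ)⟧')) ∈ distTriang T)
    (hB : B ∈ S) : φ ≫ f⟦(1 : ℤ)⟧' = 0 := by
  obtain ⟨β, hβ, -⟩ := complete_distinguished_triangle_morphism₂ _ _ hext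
    (rot_of_distTriang _ htri) (𝟙 A) φ
    (by
      change (-(φ ≫ f⟦(1 : ℤ)⟧')) ≫ (𝟙 A)⟦(1 : ℤ)⟧' = φ ≫ (-f⟦(1 : ℤ)⟧')
      rw [CategoryTheory.Functor.map_id, Category.comp_id, Preadditive.comp_neg])
  have : Mono i := hα.mono_of_fac hB i β (hβ.trans (Category.id_comp α))
  exact neg_eq_zero.mp (Triangle.mor₃_eq_zero_of_mono₁ _ hext this)

theorem wakamatsu_triangulated_general (S : Set T)
    -- `S` is closed under isomorphisms, extensions and direct summands
    (hext : ∀ {A B C : T} (f : A ⟶ B) (g : B ⟶ C) (h : C ⟶ A⟦(1 : ℤ)⟧),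
      Triangle.mk f g h ∈ (distTriang T) → A ∈ S → C ∈ S → B ∈ S)
    {K A X : T} (α : A ⟶ X) (hα : IsCover S α)
    (f : K ⟶ A) (h : X ⟶ K⟦(1 : ℤ)⟧)
    (htri : Triangle.mk f α h ∈ distTriang T)
    (C : T) (hC : C ∈ S) (φ : C ⟶ K⟦(1 : ℤ)⟧) : φ = 0 := by
  obtain ⟨B, i, p, hextTri⟩ := distinguished_cocone_triangle₂ (-(φ ≫ f⟦(1 : ℤ)⟧'))
  have hφf : φ ≫ f⟦(1 : ℤ)⟧' = 0 :=
    hα.comp_shift_map_eq_zero htri hextTri (hext i p _ hextTri hα.1.1 hC)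
  obtain ⟨g, rfl⟩ := Triangle.coyoneda_exact₁ _ htri φ hφf
  exact hα.1.comp_mor₃_eq_zero htri hC g

/-- **Triangulated Wakamatsu's Lemma.** If `α : A ⟶ X` is an `S`-cover and
`K ⟶ A ⟶ X ⟶ ΣK` is a distinguished triangle, then `Hom(C, ΣK) = 0` for every `C` in `S`. -/
theorem wakamatsu_triangulated (S : Set T)
    -- `T` is skeletally small, idempotent complete, with finite-dimensional Hom spaces
    [EssentiallySmall.{v} T] [IsIdempotentComplete T]
    (hfd : ∀ X Y : T, FiniteDimensional k (X ⟶ Y))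
    -- `S` is closed under isomorphisms, extensions and direct summands
    (hiso : ∀ {X Y : T}, (X ≅ Y) → X ∈ S → Y ∈ S)
    (hext : ∀ {A B C : T} (f : A ⟶ B) (g : B ⟶ C) (h : C ⟶ A⟦(1 : ℤ)⟧),
      Triangle.mk f g h ∈ (distTriang T) → A ∈ S → C ∈ S → B ∈ S)
    (hsum : ∀ {A A₁ : T} (i : A₁ ⟶ A) (p : A ⟶ A₁), i ≫ p = 𝟙 A₁ → A ∈ S → A₁ ∈ S)
    {K A X : T} (α : A ⟶ X) (hα : IsCover S α)
    (f : K ⟶ A) (h : X ⟶ K⟦(1 : ℤ)⟧)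
    (htri : Triangle.mk f α h ∈ distTriang T)
    (C : T) (hC : C ∈ S) (φ : C ⟶ K⟦(1 : ℤ)⟧) : φ = 0 :=
  wakamatsu_triangulated_general S hext α hα f h htri C hC φ
end

section
/- Let X → Y --y--> Z --d--> ΣX be an Auslander-Reiten triangle in 𝒯, and view the abelian group Hom(Z, ΣX) as a right module over the endomorphism ring End(Z) = Hom(Z, Z) via composition of morphisms (m · r = m ∘ r). Then the End(Z)-submodule of Hom(Z, ΣX) generated by d is a simple module and is contained in every non-zero End(Z)-submodule of Hom(Z, ΣX); that is, the socle of the End(Z)-module Hom(Z, ΣX) is simple and is equal to the submodule generated by d. -/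
open CategoryTheory CategoryTheory.Limits CategoryTheory.Pretriangulated

universe v u

variable {k : Type} [Field k]
variable {T : Type u} [Category.{v} T] [Preadditive T] [Linear k T]
  [HasZeroObject T] [HasShift T ℤ] [∀ n : ℤ, (shiftFunctor T n).Additive]
  [Pretriangulated T]

/-- `X ⟶ Y ⟶ Z --d--> ΣX` is an Auslander-Reiten triangle in `T`: a distinguished triangle
with `d ≠ 0`, such that every non-section out of `X` factors through `X ⟶ Y` and every
non-retraction into `Z` factors through `Y ⟶ Z`. -/
def IsARTriangle {X Y Z : T} (f : X ⟶ Y) (g : Y ⟶ Z) (d : Z ⟶ X⟦(1 : ℤ)⟧) : Prop :=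
  (Triangle.mk f g d ∈ distTriang T) ∧ d ≠ 0 ∧
    (∀ (X' : T) (u : X ⟶ X'), ¬(∃ v : X' ⟶ X, u ≫ v = 𝟙 X) → ∃ w : Y ⟶ X', f ≫ w = u) ∧
    (∀ (Z' : T) (u : Z' ⟶ Z), ¬(∃ v : Z ⟶ Z', v ≫ u = 𝟙 Z) → ∃ w : Z' ⟶ Y, w ≫ g = u)

/-- A subset `M` of `Hom(Z, W)` is an `End(Z)`-submodule for the right action
`m · r = m ∘ r` if it contains `0`, is closed under addition, and is closed under
precomposition with arbitrary endomorphisms of `Z`. -/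
def IsEndSubmodule {Z W : T} (M : Set (Z ⟶ W)) : Prop :=
  (0 : Z ⟶ W) ∈ M ∧ (∀ m₁ m₂ : Z ⟶ W, m₁ ∈ M → m₂ ∈ M → m₁ + m₂ ∈ M) ∧
    (∀ m ∈ M, ∀ r : Z ⟶ Z, r ≫ m ∈ M)

/-- If `X ⟶ Y ⟶ Z --d--> ΣX` is an Auslander-Reiten triangle, then in the right
`End(Z)`-module `Hom(Z, ΣX)` the submodule generated by `d` (namely `{r ≫ d | r}`)
is contained in every non-zero submodule, is non-zero, and is simple; hence the socle
of `Hom(Z, ΣX)` is simple and equals the submodule generated by `d`. -/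
theorem socle_of_AR_triangle
    [EssentiallySmall.{v} T] [IsIdempotentComplete T]
    (hfd : ∀ X Y : T, FiniteDimensional k (X ⟶ Y))
    {X Y Z : T} (f : X ⟶ Y) (y : Y ⟶ Z) (d : Z ⟶ X⟦(1 : ℤ)⟧)
    (hAR : IsARTriangle f y d) :
    -- the submodule generated by `d` is contained in every non-zero submodule
    (∀ M : Set (Z ⟶ X⟦(1 : ℤ)⟧), IsEndSubmodule M → (∃ m ∈ M, m ≠ 0) →
      {m : Z ⟶ X⟦(1 : ℤ)⟧ | ∃ r : Z ⟶ Z, r ≫ d = m} ⊆ M) ∧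
    -- the submodule generated by `d` is non-zero
    (∃ m : Z ⟶ X⟦(1 : ℤ)⟧, (∃ r : Z ⟶ Z, r ≫ d = m) ∧ m ≠ 0) ∧
    -- the submodule generated by `d` is simple: its only submodules are `0` and itself
    (∀ M : Set (Z ⟶ X⟦(1 : ℤ)⟧), IsEndSubmodule M →
      M ⊆ {m : Z ⟶ X⟦(1 : ℤ)⟧ | ∃ r : Z ⟶ Z, r ≫ d = m} →
      (∀ m ∈ M, m = 0) ∨ M = {m : Z ⟶ X⟦(1 : ℤ)⟧ | ∃ r : Z ⟶ Z, r ≫ d = m}) := by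
  obtain ⟨hdist, hd0, hX, hZ⟩ := hAR
  have key : ∀ m : Z ⟶ X⟦(1:ℤ)⟧, m ≠ 0 → ∃ r : Z ⟶ Z, r ≫ m = d := by
    intro m hm
    obtain ⟨E, t, h, hT⟩ := Pretriangulated.distinguished_cocone_triangle₁ m
    set s : X ⟶ E := (shiftFunctor T (1:ℤ)).preimage h with hs
    have hsh : (shiftFunctor T (1:ℤ)).map s = h := (shiftFunctor T (1:ℤ)).map_preimage h
    have hns : ¬ ∃ v : E ⟶ X, s ≫ v = 𝟙 X := by
      rintro ⟨v, hv⟩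
      apply hm
      have h1 : m ≫ h = 0 := comp_distTriang_mor_zero₂₃ _ hT
      have h2 : h ≫ (shiftFunctor T (1:ℤ)).map v = 𝟙 _ := by
        rw [← hsh, ← Functor.map_comp, hv, CategoryTheory.Functor.map_id]
      calc m = m ≫ h ≫ (shiftFunctor T (1:ℤ)).map v := by rw [h2, Category.comp_id]
        _ = 0 := by rw [← Category.assoc, h1, zero_comp]
    obtain ⟨w, hw⟩ := hX E s hns
    have hdh : d ≫ h = 0 := by
      have h2 : d ≫ (shiftFunctor T (1:ℤ)).map f = 0 :=
        comp_distTriang_mor_zero₃₁ _ hdist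
      rw [← hsh, ← hw, Functor.map_comp, ← Category.assoc, h2, zero_comp]
    obtain ⟨r, hr⟩ := Pretriangulated.Triangle.coyoneda_exact₃ _ hT d hdh
    exact ⟨r, hr.symm⟩
  have incl : ∀ M : Set (Z ⟶ X⟦(1 : ℤ)⟧), IsEndSubmodule M → (∃ m ∈ M, m ≠ 0) →
      {m : Z ⟶ X⟦(1 : ℤ)⟧ | ∃ r : Z ⟶ Z, r ≫ d = m} ⊆ M := by
    rintro M hM ⟨m, hmM, hm⟩ x ⟨r, rfl⟩
    obtain ⟨r₀, hr₀⟩ := key m hm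
    have := hM.2.2 m hmM (r ≫ r₀)
    rwa [Category.assoc, hr₀] at this
  refine ⟨incl, ⟨d, ⟨𝟙 Z, Category.id_comp d⟩, hd0⟩, ?_⟩
  intro M hM hMsub
  by_cases hz : ∀ m ∈ M, m = 0
  · exact Or.inl hz
  · push_neg at hz
    exact Or.inr (Set.Subset.antisymm hMsub (incl M hM hz))
end

section
/- Let C be an object of 𝒞 and let X → Y → C --d--> ΣX be an Auslander-Reiten triangle in 𝒯. Suppose α : A → X is a 𝒞-cover. Then A is either a zero object or indecomposable (i.e., A is non-zero and in any direct sum decomposition A ≅ A₁ ⊕ A₂, one of A₁, A₂ is a zero object). -/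
/-!
If `A ≅ A₁ ⊕ A₂`, right minimality of `α` rules out a summand `Aⱼ` with `Aⱼ ≠ 0` and
`iⱼ ≫ α = 0`. Otherwise both `iⱼ ≫ α` are nonzero maps into `X`, and the Auslander-Reiten
property lets `d` factor as `ξⱼ ≫ Σ(iⱼ ≫ α)`. Since `α` is a cover and `S` is closed under
extensions, `Σα ∘ -` is injective on `Hom(C, ΣA)` (Wakamatsu's lemma), so
`ξ₁ ≫ Σi₁ = ξ₂ ≫ Σi₂`; projecting onto `ΣA₁` gives `ξ₁ = 0`, whence `d = 0`.
-/

open CategoryTheory CategoryTheory.Limits CategoryTheory.Pretriangulated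

universe v u

variable {k : Type} [Field k]
variable {T : Type u} [Category.{v} T] [Preadditive T] [Linear k T]
  [HasZeroObject T] [HasShift T ℤ] [∀ n : ℤ, (shiftFunctor T n).Additive]
  [Pretriangulated T]

namespace IsARTriangle

variable {X Y Z : T} {f : X ⟶ Y} {g : Y ⟶ Z} {d : Z ⟶ X⟦(1 : ℤ)⟧}

lemma comp_shift_map_eq_zero (hAR : IsARTriangle f g d) {X' : T} (u : X ⟶ X')
    (hu : ¬∃ v : X' ⟶ X, u ≫ v = 𝟙 X) : d ≫ u⟦(1 : ℤ)⟧' = 0 := by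
  obtain ⟨w, rfl⟩ := hAR.2.2.1 X' u hu
  have hdf : d ≫ f⟦(1 : ℤ)⟧' = 0 := comp_distTriang_mor_zero₃₁ _ hAR.1
  rw [Functor.map_comp, reassoc_of% hdf, zero_comp]

lemma exists_comp_shift_map_eq (hAR : IsARTriangle f g d) {A : T} (β : A ⟶ X) (hβ : β ≠ 0) :
    ∃ ξ : Z ⟶ A⟦(1 : ℤ)⟧, ξ ≫ β⟦(1 : ℤ)⟧' = d := by
  obtain ⟨U, x, u, hT⟩ := distinguished_cocone_triangle β
  have hx : ¬∃ v : U ⟶ X, x ≫ v = 𝟙 X := by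
    rintro ⟨v, hv⟩
    have hβx : β ≫ x = 0 := comp_distTriang_mor_zero₁₂ _ hT
    exact hβ (by rw [← Category.comp_id β, ← hv, reassoc_of% hβx, zero_comp])
  obtain ⟨ξ, hξ⟩ : ∃ ξ : Z ⟶ A⟦(1 : ℤ)⟧, d = ξ ≫ (-(β⟦(1 : ℤ)⟧')) :=
    Triangle.coyoneda_exact₁ _ (rot_of_distTriang _ hT) d (hAR.comp_shift_map_eq_zero x hx)
  exact ⟨-ξ, by rw [Preadditive.neg_comp, ← Preadditive.comp_neg]; exact hξ.symm⟩

end IsARTriangle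

lemma isZero_of_comp_eq_zero_of_rightMinimal {𝒜 : Type*} [Category 𝒜] [Preadditive 𝒜]
    {A A₁ X : 𝒜} (α : A ⟶ X) (hmin : ∀ e : A ⟶ A, e ≫ α = α → IsIso e)
    (i : A₁ ⟶ A) (p : A ⟶ A₁) (hip : i ≫ p = 𝟙 A₁)
    (hi : i ≫ α = 0) : IsZero A₁ := by
  have : IsIso (𝟙 A - p ≫ i) := hmin _ (by simp [hi])
  have hi₀ : i = 0 := by
    rw [← cancel_mono (𝟙 A - p ≫ i)]
    simp [reassoc_of% hip]
  rw [IsZero.iff_id_eq_zero, ← hip, hi₀, zero_comp]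

lemma IsCover.eq_zero_of_comp_shift_map_eq_zero {S : Set T}
    (hext : ∀ {A B C : T} (f : A ⟶ B) (g : B ⟶ C) (h : C ⟶ A⟦(1 : ℤ)⟧),
      Triangle.mk f g h ∈ (distTriang T) → A ∈ S → C ∈ S → B ∈ S)
    {A X C : T} {α : A ⟶ X} (hα : IsCover S α) (hC : C ∈ S)
    (ξ : C ⟶ A⟦(1 : ℤ)⟧) (hξ : ξ ≫ α⟦(1 : ℤ)⟧' = 0) : ξ = 0 := by
  obtain ⟨E, ι, π, hT⟩ := distinguished_cocone_triangle₂ ξ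
  have hT' : Triangle.mk π ξ (-(ι⟦(1 : ℤ)⟧')) ∈ distTriang T := rot_of_distTriang _ hT
  obtain ⟨g, hg⟩ : ∃ g : E⟦(1 : ℤ)⟧ ⟶ X⟦(1 : ℤ)⟧, α⟦(1 : ℤ)⟧' = (-(ι⟦(1 : ℤ)⟧')) ≫ g :=
    Triangle.yoneda_exact₃ _ hT' _ hξ
  set θ := -(shiftFunctor T (1 : ℤ)).preimage g
  have hθ : α = ι ≫ θ := (shiftFunctor T (1 : ℤ)).map_injective (by simp [θ, hg])
  -- `α` extends over `ι` and the extension lifts back through the cover, so `ι` splits.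
  obtain ⟨τ, hτ⟩ := hα.1.2 E (hext ι π ξ hT hα.1.1 hC) θ
  have : IsIso (ι ≫ τ) := hα.2 _ (by rw [Category.assoc, hτ]; exact hθ.symm)
  have : Mono ι := mono_of_mono ι τ
  exact Triangle.mor₃_eq_zero_of_mono₁ _ hT this

theorem cover_zero_or_indecomposable_general (S : Set T)
    (hext : ∀ {A B C : T} (f : A ⟶ B) (g : B ⟶ C) (h : C ⟶ A⟦(1 : ℤ)⟧),
      Triangle.mk f g h ∈ (distTriang T) → A ∈ S → C ∈ S → B ∈ S)
    {X Y C A : T} (hC : C ∈ S)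
    (f : X ⟶ Y) (g : Y ⟶ C) (d : C ⟶ X⟦(1 : ℤ)⟧) (hAR : IsARTriangle f g d)
    (α : A ⟶ X) (hα : IsCover S α) :
    Limits.IsZero A ∨ (¬ Limits.IsZero A ∧
      ∀ (A₁ A₂ : T) (i₁ : A₁ ⟶ A) (i₂ : A₂ ⟶ A) (p₁ : A ⟶ A₁) (p₂ : A ⟶ A₂),
        i₁ ≫ p₁ = 𝟙 A₁ → i₂ ≫ p₂ = 𝟙 A₂ → i₁ ≫ p₂ = 0 → i₂ ≫ p₁ = 0 →
        p₁ ≫ i₁ + p₂ ≫ i₂ = 𝟙 A → Limits.IsZero A₁ ∨ Limits.IsZero A₂) := by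
  by_cases hA : IsZero A
  · exact Or.inl hA
  refine Or.inr ⟨hA, fun A₁ A₂ i₁ i₂ p₁ p₂ h₁₁ h₂₂ _ h₂₁ _ => ?_⟩
  by_cases h₁ : i₁ ≫ α = 0
  · exact Or.inl (isZero_of_comp_eq_zero_of_rightMinimal α hα.2 i₁ p₁ h₁₁ h₁)
  by_cases h₂ : i₂ ≫ α = 0
  · exact Or.inr (isZero_of_comp_eq_zero_of_rightMinimal α hα.2 i₂ p₂ h₂₂ h₂)
  obtain ⟨ξ₁, hξ₁⟩ := hAR.exists_comp_shift_map_eq (i₁ ≫ α) h₁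
  obtain ⟨ξ₂, hξ₂⟩ := hAR.exists_comp_shift_map_eq (i₂ ≫ α) h₂
  have heq : ξ₁ ≫ i₁⟦(1 : ℤ)⟧' = ξ₂ ≫ i₂⟦(1 : ℤ)⟧' := by
    rw [← sub_eq_zero]
    refine hα.eq_zero_of_comp_shift_map_eq_zero hext hC _ ?_
    simp only [Preadditive.sub_comp, Category.assoc, ← Functor.map_comp, hξ₁, hξ₂, sub_self]
  have hξ₁0 : ξ₁ = 0 := by
    simpa [← Functor.map_comp, h₁₁, h₂₁] using congrArg (· ≫ p₁⟦(1 : ℤ)⟧') heq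
  exact absurd (by rw [← hξ₁, hξ₁0, zero_comp]) hAR.2.1

/-- If `C` lies in `S`, `X ⟶ Y ⟶ C --d--> ΣX` is an Auslander-Reiten triangle in `T` and
`α : A ⟶ X` is an `S`-cover, then `A` is either zero or indecomposable. -/
theorem cover_zero_or_indecomposable (S : Set T)
    [EssentiallySmall.{v} T] [IsIdempotentComplete T]
    (hfd : ∀ X Y : T, FiniteDimensional k (X ⟶ Y))
    (hiso : ∀ {X Y : T}, (X ≅ Y) → X ∈ S → Y ∈ S)
    (hext : ∀ {A B C : T} (f : A ⟶ B) (g : B ⟶ C) (h : C ⟶ A⟦(1 : ℤ)⟧),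
      Triangle.mk f g h ∈ (distTriang T) → A ∈ S → C ∈ S → B ∈ S)
    (hsum : ∀ {A A₁ : T} (i : A₁ ⟶ A) (p : A ⟶ A₁), i ≫ p = 𝟙 A₁ → A ∈ S → A₁ ∈ S)
    {X Y C A : T} (hC : C ∈ S)
    (f : X ⟶ Y) (g : Y ⟶ C) (d : C ⟶ X⟦(1 : ℤ)⟧) (hAR : IsARTriangle f g d)
    (α : A ⟶ X) (hα : IsCover S α) :
    Limits.IsZero A ∨ (¬ Limits.IsZero A ∧
      ∀ (A₁ A₂ : T) (i₁ : A₁ ⟶ A) (i₂ : A₂ ⟶ A) (p₁ : A ⟶ A₁) (p₂ : A ⟶ A₂),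
        i₁ ≫ p₁ = 𝟙 A₁ → i₂ ≫ p₂ = 𝟙 A₂ → i₁ ≫ p₂ = 0 → i₂ ≫ p₁ = 0 →
        p₁ ≫ i₁ + p₂ ≫ i₂ = 𝟙 A → Limits.IsZero A₁ ∨ Limits.IsZero A₂) :=
  cover_zero_or_indecomposable_general S hext hC f g d hAR α hα
end

section
/- Let A → B → C → ΣA be an Auslander-Reiten triangle in the subcategory 𝒞. Then the endomorphism rings End(A) = Hom(A, A) and End(C) = Hom(C, C) are local rings; in particular, A and C are indecomposable objects. -/
/-!
A non-invertible endomorphism `u` of `A` is not a section, since `End A` is finite-dimensional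
and hence Dedekind-finite; so the Auslander–Reiten property makes `u` factor through `f`.
Conversely nothing of the form `f ≫ w` is invertible, as that would make `f` a split
monomorphism and force the connecting morphism `h` to vanish. Hence the non-units of `End A`
are exactly the maps factoring through `f`, which are closed under addition, and `End A` is
local. Dually, the non-units of `End C` are the maps factoring through `g`.
-/

open CategoryTheory CategoryTheory.Limits CategoryTheory.Pretriangulated

universe v u

variable {k : Type} [Field k]
variable {T : Type u} [Category.{v} T] [Preadditive T] [Linear k T]
  [HasZeroObject T] [HasShift T ℤ] [∀ n : ℤ, (shiftFunctor T n).Additive]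
  [Pretriangulated T]

/-- `A ⟶ B ⟶ C --h--> ΣA` is an Auslander-Reiten triangle in the subcategory determined
by `S`: a distinguished triangle with all three objects in `S`, non-zero connecting
morphism, such that every non-section `A ⟶ A'` with `A'` in `S` factors through `A ⟶ B`
and every non-retraction `C' ⟶ C` with `C'` in `S` factors through `B ⟶ C`. -/
def IsARTriangleIn (S : Set T) {A B C : T} (f : A ⟶ B) (g : B ⟶ C)
    (h : C ⟶ A⟦(1 : ℤ)⟧) : Prop :=
  A ∈ S ∧ B ∈ S ∧ C ∈ S ∧ (Triangle.mk f g h ∈ distTriang T) ∧ h ≠ 0 ∧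
    (∀ A' : T, A' ∈ S → ∀ u : A ⟶ A',
      ¬(∃ v : A' ⟶ A, u ≫ v = 𝟙 A) → ∃ w : B ⟶ A', f ≫ w = u) ∧
    (∀ C' : T, C' ∈ S → ∀ u : C' ⟶ C,
      ¬(∃ v : C ⟶ C', v ≫ u = 𝟙 C) → ∃ w : C' ⟶ B, w ≫ g = u)

theorem IsLocalRing.of_nonunits_eq {R : Type*} [Semiring R] (I : AddSubmonoid R)
    (hI : (I : Set R) = nonunits R) : IsLocalRing R := by
  have : Nontrivial R := nontrivial_of_ne 0 1 fun h ↦ hI.le I.zero_mem (isUnit_zero_iff.2 h)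
  exact IsLocalRing.of_nonunits_add fun a b ha hb ↦ hI.le (I.add_mem (hI.ge ha) (hI.ge hb))

section Endomorphisms

variable {C : Type*} [Category C]

section DedekindFinite

variable {X : C} [IsDedekindFiniteMonoid (End X)] {u v : X ⟶ X}

theorem isIso_of_comp_eq_id_left (huv : u ≫ v = 𝟙 X) : IsIso u :=
  (isUnit_iff_isIso (X := X) u).1 (.of_mul_eq_one_right v huv)

theorem isIso_of_comp_eq_id_right (huv : u ≫ v = 𝟙 X) : IsIso v :=
  (isUnit_iff_isIso (X := X) v).1 (.of_mul_eq_one u huv)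

end DedekindFinite

theorem isDedekindFiniteMonoid_end_of_finiteDimensional [Preadditive C] [Linear k C] (X : C)
    [FiniteDimensional k (End X)] : IsDedekindFiniteMonoid (End X) :=
  have : IsArtinianRing (End X) := IsArtinianRing.of_finite k (End X)
  inferInstance

variable [Preadditive C] {X X₁ X₂ : C}

theorem isZero_of_comp_eq_id_of_comp_eq_zero {i : X₁ ⟶ X} {p : X ⟶ X₁}
    (hip : i ≫ p = 𝟙 X₁) (hpi : p ≫ i = 0) : IsZero X₁ := by
  rw [IsZero.iff_id_eq_zero, ← hip]
  calc i ≫ p = i ≫ (p ≫ i) ≫ p := by simp [reassoc_of% hip]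
    _ = 0 := by simp [hpi]

theorem isZero_of_isIso_of_comp_add_comp_eq_id {i₁ : X₁ ⟶ X} {i₂ : X₂ ⟶ X}
    {p₁ : X ⟶ X₁} {p₂ : X ⟶ X₂} (h₁ : i₁ ≫ p₁ = 𝟙 X₁) (h₂ : i₂ ≫ p₂ = 𝟙 X₂)
    (hsum : p₁ ≫ i₁ + p₂ ≫ i₂ = 𝟙 X) [IsIso (p₂ ≫ i₂)] : IsZero X₁ := by
  -- an invertible idempotent is the identity
  have he₂ : p₂ ≫ i₂ = 𝟙 X := by
    rw [← cancel_mono (p₂ ≫ i₂)]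
    simp [reassoc_of% h₂]
  rw [he₂, add_eq_right] at hsum
  exact isZero_of_comp_eq_id_of_comp_eq_zero h₁ hsum

theorem not_isZero_of_isLocalRing_end [IsLocalRing (End X)] : ¬ IsZero X :=
  fun hX ↦ one_ne_zero (α := End X) (hX.eq_of_src _ _)

theorem isZero_or_isZero_of_isLocalRing_end [IsLocalRing (End X)] {i₁ : X₁ ⟶ X}
    {i₂ : X₂ ⟶ X} {p₁ : X ⟶ X₁} {p₂ : X ⟶ X₂} (h₁ : i₁ ≫ p₁ = 𝟙 X₁) (h₂ : i₂ ≫ p₂ = 𝟙 X₂)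
    (hsum : p₁ ≫ i₁ + p₂ ≫ i₂ = 𝟙 X) : IsZero X₁ ∨ IsZero X₂ := by
  rcases IsLocalRing.isUnit_or_isUnit_of_add_one
    (show End.of (p₁ ≫ i₁) + End.of (p₂ ≫ i₂) = 1 from hsum) with hu | hu
  · have := (isUnit_iff_isIso _).1 hu
    exact .inr (isZero_of_isIso_of_comp_add_comp_eq_id h₂ h₁ (by rwa [add_comm]))
  · have := (isUnit_iff_isIso _).1 hu
    exact .inl (isZero_of_isIso_of_comp_add_comp_eq_id h₁ h₂ hsum)

end Endomorphisms

namespace IsARTriangleIn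

variable {S : Set T} {A B C : T} {f : A ⟶ B} {g : B ⟶ C} {h : C ⟶ A⟦(1 : ℤ)⟧}

theorem isLocalRing_end_obj₁ [IsDedekindFiniteMonoid (End A)]
    (hAR : IsARTriangleIn S f g h) : IsLocalRing (End A) := by
  obtain ⟨hA, -, -, hT, hh, hsec, -⟩ := hAR
  refine IsLocalRing.of_nonunits_eq (R := End A)
    (AddMonoidHom.mrange (Preadditive.leftComp A f)) (Set.ext fun u ↦ ⟨?_, ?_⟩)
  · rintro ⟨w, rfl⟩ hu
    have : IsIso (f ≫ w) := (isUnit_iff_isIso _).1 hu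
    exact hh (Triangle.mor₃_eq_zero_of_mono₁ _ hT (mono_of_mono f w))
  · intro hu
    exact hsec A hA u fun ⟨v, hv⟩ ↦ hu ((isUnit_iff_isIso u).2 (isIso_of_comp_eq_id_left hv))

theorem isLocalRing_end_obj₃ [IsDedekindFiniteMonoid (End C)]
    (hAR : IsARTriangleIn S f g h) : IsLocalRing (End C) := by
  obtain ⟨-, -, hC, hT, hh, -, hret⟩ := hAR
  refine IsLocalRing.of_nonunits_eq (R := End C)
    (AddMonoidHom.mrange (Preadditive.rightComp C g)) (Set.ext fun u ↦ ⟨?_, ?_⟩)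
  · rintro ⟨w, rfl⟩ hu
    have : IsIso (w ≫ g) := (isUnit_iff_isIso _).1 hu
    exact hh (Triangle.mor₃_eq_zero_of_epi₂ _ hT (epi_of_epi w g))
  · intro hu
    exact hret C hC u fun ⟨v, hv⟩ ↦ hu ((isUnit_iff_isIso u).2 (isIso_of_comp_eq_id_right hv))

end IsARTriangleIn

theorem AR_triangle_end_terms_local_general (S : Set T)
    (hfd : ∀ X Y : T, FiniteDimensional k (X ⟶ Y))
    {A B C : T} (f : A ⟶ B) (g : B ⟶ C) (h : C ⟶ A⟦(1 : ℤ)⟧)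
    (hAR : IsARTriangleIn S f g h) :
    IsLocalRing (End A) ∧ IsLocalRing (End C) ∧
    -- in particular, `A` and `C` are indecomposable
    (¬ Limits.IsZero A ∧
      ∀ (A₁ A₂ : T) (i₁ : A₁ ⟶ A) (i₂ : A₂ ⟶ A) (p₁ : A ⟶ A₁) (p₂ : A ⟶ A₂),
        i₁ ≫ p₁ = 𝟙 A₁ → i₂ ≫ p₂ = 𝟙 A₂ → i₁ ≫ p₂ = 0 → i₂ ≫ p₁ = 0 →
        p₁ ≫ i₁ + p₂ ≫ i₂ = 𝟙 A → Limits.IsZero A₁ ∨ Limits.IsZero A₂) ∧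
    (¬ Limits.IsZero C ∧
      ∀ (C₁ C₂ : T) (i₁ : C₁ ⟶ C) (i₂ : C₂ ⟶ C) (p₁ : C ⟶ C₁) (p₂ : C ⟶ C₂),
        i₁ ≫ p₁ = 𝟙 C₁ → i₂ ≫ p₂ = 𝟙 C₂ → i₁ ≫ p₂ = 0 → i₂ ≫ p₁ = 0 →
        p₁ ≫ i₁ + p₂ ≫ i₂ = 𝟙 C → Limits.IsZero C₁ ∨ Limits.IsZero C₂) := by
  have : FiniteDimensional k (End A) := hfd A A
  have : FiniteDimensional k (End C) := hfd C C
  have := isDedekindFiniteMonoid_end_of_finiteDimensional (k := k) A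
  have := isDedekindFiniteMonoid_end_of_finiteDimensional (k := k) C
  have hA : IsLocalRing (End A) := hAR.isLocalRing_end_obj₁
  have hC : IsLocalRing (End C) := hAR.isLocalRing_end_obj₃
  exact ⟨hA, hC,
    ⟨not_isZero_of_isLocalRing_end,
      fun _ _ _ _ _ _ h₁ h₂ _ _ hsum ↦ isZero_or_isZero_of_isLocalRing_end h₁ h₂ hsum⟩,
    ⟨not_isZero_of_isLocalRing_end,
      fun _ _ _ _ _ _ h₁ h₂ _ _ hsum ↦ isZero_or_isZero_of_isLocalRing_end h₁ h₂ hsum⟩⟩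

/-- The end terms of an Auslander-Reiten triangle in the subcategory `S` have local
endomorphism rings; in particular they are indecomposable. -/
theorem AR_triangle_end_terms_local (S : Set T)
    [EssentiallySmall.{v} T] [IsIdempotentComplete T]
    (hfd : ∀ X Y : T, FiniteDimensional k (X ⟶ Y))
    (hiso : ∀ {X Y : T}, (X ≅ Y) → X ∈ S → Y ∈ S)
    (hext : ∀ {A B C : T} (f : A ⟶ B) (g : B ⟶ C) (h : C ⟶ A⟦(1 : ℤ)⟧),
      Triangle.mk f g h ∈ (distTriang T) → A ∈ S → C ∈ S → B ∈ S)
    (hsum : ∀ {A A₁ : T} (i : A₁ ⟶ A) (p : A ⟶ A₁), i ≫ p = 𝟙 A₁ → A ∈ S → A₁ ∈ S)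
    {A B C : T} (f : A ⟶ B) (g : B ⟶ C) (h : C ⟶ A⟦(1 : ℤ)⟧)
    (hAR : IsARTriangleIn S f g h) :
    IsLocalRing (End A) ∧ IsLocalRing (End C) ∧
    -- in particular, `A` and `C` are indecomposable
    (¬ Limits.IsZero A ∧
      ∀ (A₁ A₂ : T) (i₁ : A₁ ⟶ A) (i₂ : A₂ ⟶ A) (p₁ : A ⟶ A₁) (p₂ : A ⟶ A₂),
        i₁ ≫ p₁ = 𝟙 A₁ → i₂ ≫ p₂ = 𝟙 A₂ → i₁ ≫ p₂ = 0 → i₂ ≫ p₁ = 0 →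
        p₁ ≫ i₁ + p₂ ≫ i₂ = 𝟙 A → Limits.IsZero A₁ ∨ Limits.IsZero A₂) ∧
    (¬ Limits.IsZero C ∧
      ∀ (C₁ C₂ : T) (i₁ : C₁ ⟶ C) (i₂ : C₂ ⟶ C) (p₁ : C ⟶ C₁) (p₂ : C ⟶ C₂),
        i₁ ≫ p₁ = 𝟙 C₁ → i₂ ≫ p₂ = 𝟙 C₂ → i₁ ≫ p₂ = 0 → i₂ ≫ p₁ = 0 →
        p₁ ≫ i₁ + p₂ ≫ i₂ = 𝟙 C → Limits.IsZero C₁ ∨ Limits.IsZero C₂) :=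
  AR_triangle_end_terms_local_general S hfd f g h hAR
end

section
/- Let C be an object of 𝒞 and suppose there exist an object A′ in 𝒞 and a non-zero morphism c : C → ΣA′. Let X → Y → C --d--> ΣX be an Auslander-Reiten triangle in 𝒯, and suppose α : A → X is a 𝒞-cover. Then there exists an Auslander-Reiten triangle A → B → C → ΣA in 𝒞 (with first term the object A and third term the object C). -/
/-!
Since `α` is a cover and `C` maps non-trivially to the shift of an object of `S`, `α ≠ 0`, so
the connecting morphism `d` of the Auslander-Reiten triangle factors as `d = w ≫ α⟦1⟧'`; the
triangle `A → B → C --w--> ΣA` is the one we want. By Wakamatsu's lemma, maps from objects of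
`S` to `ΣA` are detected after composing with `α⟦1⟧'`, which transfers the right almost split
property from `Y → C` to `B → C`. For the left one, a map `t : A → A''` with `w ≫ t⟦1⟧' ≠ 0`
yields an endomorphism `h` of `A` with `w ≫ h⟦1⟧' = w` that factors through `t`; the maps `φ`
with `w ≫ φ⟦1⟧' = 0` form a left ideal of `End A` without non-zero idempotents, so Fitting's
lemma makes `h`, hence `t`, a section.
-/

open CategoryTheory CategoryTheory.Limits CategoryTheory.Pretriangulated

universe v u

variable {k : Type} [Field k]
variable {T : Type u} [Category.{v} T] [Preadditive T] [Linear k T]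
  [HasZeroObject T] [HasShift T ℤ] [∀ n : ℤ, (shiftFunctor T n).Additive]
  [Pretriangulated T]

def IsClosedUnderExtensions (S : Set T) : Prop :=
  ∀ {A B C : T} (f : A ⟶ B) (g : B ⟶ C) (h : C ⟶ A⟦(1 : ℤ)⟧),
    Triangle.mk f g h ∈ (distTriang T) → A ∈ S → C ∈ S → B ∈ S

/-- By Fitting's lemma for right multiplication by `h`, `1 = a + z * h ^ n` with `a * h ^ n = 0`
for large `n`; then `a` is an idempotent lying in `I`. -/
lemma exists_mul_eq_one_of_one_sub_mem {R : Type*} [Ring R] [Algebra k R]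
    [FiniteDimensional k R] (I : Submodule R R) (hI : ∀ e ∈ I, IsIdempotentElem e → e = 0)
    {h : R} (hh : 1 - h ∈ I) : ∃ z, z * h = 1 := by
  obtain ⟨n, hcompl, hn⟩ := ((LinearMap.mulRight k h).eventually_isCompl_ker_pow_range_pow.and
    (Filter.eventually_gt_atTop 0)).exists
  rw [LinearMap.pow_mulRight] at hcompl
  obtain ⟨a, ha, b, ⟨z, rfl⟩, hab⟩ := Submodule.mem_sup.mp
    (hcompl.codisjoint.eq_top ▸ Submodule.mem_top : (1 : R) ∈ _ ⊔ _)
  simp only [LinearMap.mem_ker, LinearMap.mulRight_apply] at ha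
  simp only [LinearMap.mulRight_apply] at hab
  have ha_mem : a ∈ I := by
    have h1 : 1 - h ^ n ∈ I := by
      rw [← geom_sum_mul_neg]
      exact I.smul_mem _ hh
    simpa [mul_sub, ha] using I.smul_mem a h1
  have ha_idem : IsIdempotentElem a := by
    have hmem : a - a * a ∈ LinearMap.ker (LinearMap.mulRight k (h ^ n)) ⊓
        LinearMap.range (LinearMap.mulRight k (h ^ n)) := by
      refine ⟨?_, a * z, ?_⟩
      · simp [sub_mul, mul_assoc, ha]
      · simp only [LinearMap.mulRight_apply, mul_assoc]
        rw [eq_sub_of_add_eq' hab, mul_sub, mul_one]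
    rw [hcompl.inf_eq_bot, Submodule.mem_bot, sub_eq_zero] at hmem
    exact hmem.symm
  obtain ⟨m, rfl⟩ := Nat.exists_eq_add_of_lt hn
  refine ⟨z * h ^ m, ?_⟩
  rw [mul_assoc, ← pow_succ, ← hab, hI a ha_mem ha_idem, zero_add]
  ring_nf

section

variable {S : Set T} {X Y Z A : T} {f : X ⟶ Y} {g : Y ⟶ Z} {d : Z ⟶ X⟦(1 : ℤ)⟧}

namespace IsARTriangle

lemma exists_comp_shift_eq_of_ne_zero (hAR : IsARTriangle f g d) {E : T} (β : E ⟶ X)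
    (hβ : β ≠ 0) : ∃ w : Z ⟶ E⟦(1 : ℤ)⟧, w ≫ β⟦(1 : ℤ)⟧' = d := by
  obtain ⟨Q, x, δ, hT⟩ := distinguished_cocone_triangle β
  have hx : ¬ ∃ r : Q ⟶ X, x ≫ r = 𝟙 X := fun ⟨r, hr⟩ =>
    hβ (Triangle.mor₁_eq_zero_of_mono₂ _ hT (SplitMono.mono ⟨r, hr⟩))
  obtain ⟨y, rfl⟩ := hAR.2.2.1 Q x hx
  have hdx : d ≫ (f ≫ y)⟦(1 : ℤ)⟧' = 0 := by
    have hdf : d ≫ f⟦(1 : ℤ)⟧' = 0 := comp_distTriang_mor_zero₃₁ _ hAR.1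
    rw [Functor.map_comp, reassoc_of% hdf, zero_comp]
  obtain ⟨w, hw⟩ : ∃ w : Z ⟶ E⟦(1 : ℤ)⟧, d = w ≫ (-(β⟦(1 : ℤ)⟧')) :=
    Triangle.coyoneda_exact₁ _ (rot_of_distTriang _ hT) d hdx
  exact ⟨-w, by rw [hw, Preadditive.neg_comp, Preadditive.comp_neg]⟩

lemma exists_hom_ne_zero_of_ne_zero (hAR : IsARTriangle f g d) {A' : T} (c : Z ⟶ A'⟦(1 : ℤ)⟧)
    (hc : c ≠ 0) : ∃ r : A' ⟶ X, r ≠ 0 := by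
  obtain ⟨E, i, p, hT⟩ := distinguished_cocone_triangle₂ c
  have hp : ¬ ∃ s : Z ⟶ E, s ≫ p = 𝟙 Z := fun ⟨s, hs⟩ =>
    hc (Triangle.mor₃_eq_zero_of_epi₂ _ hT (SplitEpi.epi ⟨s, hs⟩))
  obtain ⟨q, hq⟩ := hAR.2.2.2 E p hp
  obtain ⟨r, -, hr⟩ : ∃ r : A' ⟶ X, _ ∧ c ≫ r⟦(1 : ℤ)⟧' = 𝟙 Z ≫ d :=
    complete_distinguished_triangle_morphism₁ _ _ hT hAR.1 q (𝟙 Z)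
      ((Category.comp_id p).trans hq.symm)
  refine ⟨r, fun hr0 => hAR.2.1 ?_⟩
  rw [hr0, Functor.map_zero, comp_zero, Category.id_comp] at hr
  exact hr.symm

end IsARTriangle

/-- Wakamatsu's lemma: `α` factors through the extension of `A` by `C'` classified by `φ`, and
right minimality of `α` forces that extension to split. -/
lemma IsCover.eq_zero_of_comp_shift_eq_zero (hS : IsClosedUnderExtensions S) {α : A ⟶ X}
    (hα : IsCover S α) {C' : T} (hC' : C' ∈ S) (φ : C' ⟶ A⟦(1 : ℤ)⟧)
    (hφ : φ ≫ α⟦(1 : ℤ)⟧' = 0) : φ = 0 := by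
  obtain ⟨Q, x, δ, hTα⟩ := distinguished_cocone_triangle α
  obtain ⟨ψ, hψ⟩ : ∃ ψ : C' ⟶ Q, φ = ψ ≫ δ := Triangle.coyoneda_exact₁ _ hTα φ hφ
  obtain ⟨E, i, p, hTE⟩ := distinguished_cocone_triangle₂ φ
  obtain ⟨b, hb, -⟩ := complete_distinguished_triangle_morphism₂ _ _ hTE hTα (𝟙 A) ψ
    (show φ ≫ (𝟙 A)⟦(1 : ℤ)⟧' = ψ ≫ δ by rw [CategoryTheory.Functor.map_id, Category.comp_id, hψ])
  obtain ⟨b', hb'⟩ := hα.1.2 E (hS i p φ hTE hα.1.1 hC') b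
  have : IsIso (i ≫ b') := hα.2 _ (by
    rw [Category.assoc, hb']
    exact hb.trans (Category.id_comp α))
  have : Mono i := mono_of_mono i b'
  exact Triangle.mor₃_eq_zero_of_mono₁ _ hTE this

lemma eq_zero_of_isIdempotent_of_comp_shift_eq_zero [IsIdempotentComplete T]
    (hS : IsClosedUnderExtensions S) (hAR : IsARTriangle f g d) {α : A ⟶ X} (hα : IsCover S α)
    (hZ : Z ∈ S) {w : Z ⟶ A⟦(1 : ℤ)⟧} (hw : w ≫ α⟦(1 : ℤ)⟧' = d)
    {e : A ⟶ A} (he : e ≫ e = e) (hwe : w ≫ e⟦(1 : ℤ)⟧' = 0) : e = 0 := by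
  obtain ⟨A₂, ι, π, hιπ, hπι⟩ := IsIdempotentComplete.idempotents_split A e he
  by_cases hια : ι ≫ α = 0
  · have heα : e ≫ α = 0 := by rw [← hπι, Category.assoc, hια, comp_zero]
    have : IsIso (𝟙 A - e) := hα.2 _ (by
      rw [Preadditive.sub_comp, heα, sub_zero, Category.id_comp])
    calc e = (e ≫ (𝟙 A - e)) ≫ inv (𝟙 A - e) := by
          rw [Category.assoc, IsIso.hom_inv_id, Category.comp_id]
      _ = 0 := by rw [Preadditive.comp_sub, Category.comp_id, he, sub_self, zero_comp]
  · obtain ⟨w₂, hw₂⟩ := hAR.exists_comp_shift_eq_of_ne_zero (ι ≫ α) hια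
    have hw_eq : w = w₂ ≫ ι⟦(1 : ℤ)⟧' := by
      refine sub_eq_zero.mp (hα.eq_zero_of_comp_shift_eq_zero hS hZ _ ?_)
      rw [Preadditive.sub_comp, hw, Category.assoc, ← Functor.map_comp, hw₂, sub_self]
    have hw₂0 : w₂ = 0 := by
      calc w₂ = w ≫ π⟦(1 : ℤ)⟧' := by
            rw [hw_eq, Category.assoc, ← Functor.map_comp, hιπ, CategoryTheory.Functor.map_id,
              Category.comp_id]
        _ = w ≫ (e ≫ π)⟦(1 : ℤ)⟧' := by rw [← hπι, Category.assoc, hιπ, Category.comp_id]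
        _ = 0 := by rw [Functor.map_comp, reassoc_of% hwe, zero_comp]
    exact absurd (by rw [← hw₂, hw₂0, zero_comp]) hAR.2.1

lemma exists_retraction_of_comp_shift_eq_self [IsIdempotentComplete T]
    [FiniteDimensional k (A ⟶ A)]
    (hS : IsClosedUnderExtensions S) (hAR : IsARTriangle f g d) {α : A ⟶ X} (hα : IsCover S α)
    (hZ : Z ∈ S) {w : Z ⟶ A⟦(1 : ℤ)⟧} (hw : w ≫ α⟦(1 : ℤ)⟧' = d)
    (h : A ⟶ A) (hwh : w ≫ h⟦(1 : ℤ)⟧' = w) : ∃ z, h ≫ z = 𝟙 A := by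
  let I : Submodule (End A) (End A) :=
    { carrier := {φ | w ≫ φ⟦(1 : ℤ)⟧' = 0}
      add_mem' := fun {φ ψ} (hφ : w ≫ φ⟦(1 : ℤ)⟧' = 0) (hψ : w ≫ ψ⟦(1 : ℤ)⟧' = 0) =>
        show w ≫ (φ + ψ : A ⟶ A)⟦(1 : ℤ)⟧' = 0 by
          rw [Functor.map_add, Preadditive.comp_add, hφ, hψ, add_zero]
      zero_mem' := show w ≫ (0 : A ⟶ A)⟦(1 : ℤ)⟧' = 0 by rw [Functor.map_zero, comp_zero]
      smul_mem' := fun r φ (hφ : w ≫ φ⟦(1 : ℤ)⟧' = 0) =>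
        show w ≫ (φ ≫ r)⟦(1 : ℤ)⟧' = 0 by rw [Functor.map_comp, reassoc_of% hφ, zero_comp] }
  have hI : ∀ e ∈ I, IsIdempotentElem e → e = 0 := fun e hwe he =>
    eq_zero_of_isIdempotent_of_comp_shift_eq_zero hS hAR hα hZ hw he hwe
  have h1 : (1 : End A) - (show End A from h) ∈ I := show w ≫ (𝟙 A - h)⟦(1 : ℤ)⟧' = 0 by
    rw [Functor.map_sub, Preadditive.comp_sub, hwh, CategoryTheory.Functor.map_id,
      Category.comp_id, sub_self]
  have : FiniteDimensional k (End A) := ‹FiniteDimensional k (A ⟶ A)›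
  exact exists_mul_eq_one_of_one_sub_mem (k := k) I hI h1

lemma exists_lift_of_not_retraction (hS : IsClosedUnderExtensions S) (hAR : IsARTriangle f g d)
    {α : A ⟶ X} (hα : IsCover S α) {B : T} {u : A ⟶ B} {v : B ⟶ Z} {w : Z ⟶ A⟦(1 : ℤ)⟧}
    (hT : Triangle.mk u v w ∈ distTriang T) (hw : w ≫ α⟦(1 : ℤ)⟧' = d)
    {C' : T} (hC' : C' ∈ S) (t : C' ⟶ Z) (ht : ¬ ∃ s : Z ⟶ C', s ≫ t = 𝟙 Z) :
    ∃ t' : C' ⟶ B, t' ≫ v = t := by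
  obtain ⟨t₀, rfl⟩ := hAR.2.2.2 C' t ht
  have hgd : g ≫ d = 0 := comp_distTriang_mor_zero₂₃ _ hAR.1
  have htw : (t₀ ≫ g) ≫ w = 0 := hα.eq_zero_of_comp_shift_eq_zero hS hC' _ (by
    rw [Category.assoc, Category.assoc, hw, hgd, comp_zero])
  obtain ⟨t', ht'⟩ := Triangle.coyoneda_exact₃ _ hT _ htw
  exact ⟨t', ht'.symm⟩

lemma exists_extension_of_not_section [IsIdempotentComplete T] [FiniteDimensional k (A ⟶ A)]
    (hS : IsClosedUnderExtensions S) (hAR : IsARTriangle f g d) {α : A ⟶ X} (hα : IsCover S α)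
    (hZ : Z ∈ S) {B : T} {u : A ⟶ B} {v : B ⟶ Z} {w : Z ⟶ A⟦(1 : ℤ)⟧}
    (hT : Triangle.mk u v w ∈ distTriang T) (hw : w ≫ α⟦(1 : ℤ)⟧' = d)
    {A'' : T} (hA'' : A'' ∈ S) (t : A ⟶ A'') (ht : ¬ ∃ s : A'' ⟶ A, t ≫ s = 𝟙 A) :
    ∃ t' : B ⟶ A'', u ≫ t' = t := by
  suffices hwt : w ≫ t⟦(1 : ℤ)⟧' = 0 by
    obtain ⟨t', ht', -⟩ := complete_distinguished_triangle_morphism₂ _ _ hT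
      (contractible_distinguished A'') t 0 (hwt.trans comp_zero.symm)
    exact ⟨t', ht'.trans (Category.comp_id t)⟩
  by_contra hwt
  obtain ⟨B', u', v', hT'⟩ := distinguished_cocone_triangle₂ (w ≫ t⟦(1 : ℤ)⟧')
  have hv' : ¬ ∃ s : Z ⟶ B', s ≫ v' = 𝟙 Z := fun ⟨s, hs⟩ =>
    hwt (Triangle.mor₃_eq_zero_of_epi₂ _ hT' (SplitEpi.epi ⟨s, hs⟩))
  obtain ⟨b, hb⟩ := exists_lift_of_not_retraction hS hAR hα hT hw (hS u' v' _ hT' hA'' hZ) v' hv'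
  obtain ⟨a, -, ha⟩ : ∃ a : A'' ⟶ A, _ ∧ (w ≫ t⟦(1 : ℤ)⟧') ≫ a⟦(1 : ℤ)⟧' = 𝟙 Z ≫ w :=
    complete_distinguished_triangle_morphism₁ _ _ hT' hT b (𝟙 Z)
      ((Category.comp_id v').trans hb.symm)
  obtain ⟨z, hz⟩ := exists_retraction_of_comp_shift_eq_self (k := k) hS hAR hα hZ hw (t ≫ a) (by
    rw [Functor.map_comp, ← Category.assoc, ha, Category.id_comp])
  exact ht ⟨a ≫ z, by rw [← Category.assoc, hz]⟩

end

theorem AR_triangle_in_subcategory_of_cover_general (S : Set T)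
    [IsIdempotentComplete T]
    (hfd : ∀ X Y : T, FiniteDimensional k (X ⟶ Y))
    (hext : ∀ {A B C : T} (f : A ⟶ B) (g : B ⟶ C) (h : C ⟶ A⟦(1 : ℤ)⟧),
      Triangle.mk f g h ∈ (distTriang T) → A ∈ S → C ∈ S → B ∈ S)
    {C A' : T} (hC : C ∈ S) (hA' : A' ∈ S)
    (c : C ⟶ A'⟦(1 : ℤ)⟧) (hc : c ≠ 0)
    {X Y : T} (f : X ⟶ Y) (g : Y ⟶ C) (d : C ⟶ X⟦(1 : ℤ)⟧)
    (hAR : IsARTriangle f g d)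
    {A : T} (α : A ⟶ X) (hα : IsCover S α) :
    ∃ (B : T) (u : A ⟶ B) (v : B ⟶ C) (w : C ⟶ A⟦(1 : ℤ)⟧),
      IsARTriangleIn S u v w := by
  have hα0 : α ≠ 0 := by
    obtain ⟨r, hr⟩ := hAR.exists_hom_ne_zero_of_ne_zero c hc
    obtain ⟨γ, rfl⟩ := hα.1.2 A' hA' r
    exact fun h0 => hr (by rw [h0, comp_zero])
  obtain ⟨w, hw⟩ := hAR.exists_comp_shift_eq_of_ne_zero α hα0
  obtain ⟨B, u, v, hT⟩ := distinguished_cocone_triangle₂ w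
  have := hfd A A
  exact ⟨B, u, v, w, hα.1.1, hext u v w hT hα.1.1 hC, hC, hT,
    fun hw0 => hAR.2.1 (by rw [← hw, hw0, zero_comp]),
    fun _ hA'' t ht => exists_extension_of_not_section (k := k) hext hAR hα hC hT hw hA'' t ht,
    fun _ hC' t ht => exists_lift_of_not_retraction hext hAR hα hT hw hC' t ht⟩

/-- Main theorem, (i) ⟹ (ii): if `C ∈ S` admits a non-zero morphism to a shift of an
object of `S`, `X ⟶ Y ⟶ C --d--> ΣX` is an Auslander-Reiten triangle in `T`, and
`α : A ⟶ X` is an `S`-cover, then there is an Auslander-Reiten triangle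
`A ⟶ B ⟶ C ⟶ ΣA` in the subcategory `S`. -/
theorem AR_triangle_in_subcategory_of_cover (S : Set T)
    [EssentiallySmall.{v} T] [IsIdempotentComplete T]
    (hfd : ∀ X Y : T, FiniteDimensional k (X ⟶ Y))
    (hiso : ∀ {X Y : T}, (X ≅ Y) → X ∈ S → Y ∈ S)
    (hext : ∀ {A B C : T} (f : A ⟶ B) (g : B ⟶ C) (h : C ⟶ A⟦(1 : ℤ)⟧),
      Triangle.mk f g h ∈ (distTriang T) → A ∈ S → C ∈ S → B ∈ S)
    (hsum : ∀ {A A₁ : T} (i : A₁ ⟶ A) (p : A ⟶ A₁), i ≫ p = 𝟙 A₁ → A ∈ S → A₁ ∈ S)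
    {C A' : T} (hC : C ∈ S) (hA' : A' ∈ S)
    (c : C ⟶ A'⟦(1 : ℤ)⟧) (hc : c ≠ 0)
    {X Y : T} (f : X ⟶ Y) (g : Y ⟶ C) (d : C ⟶ X⟦(1 : ℤ)⟧)
    (hAR : IsARTriangle f g d)
    {A : T} (α : A ⟶ X) (hα : IsCover S α) :
    ∃ (B : T) (u : A ⟶ B) (v : B ⟶ C) (w : C ⟶ A⟦(1 : ℤ)⟧),
      IsARTriangleIn S u v w :=
  AR_triangle_in_subcategory_of_cover_general S hfd hext hC hA' c hc f g d hAR α hα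
end

section
/- Let C be an object of 𝒞 and suppose there exist an object A′ in 𝒞 and a non-zero morphism c : C → ΣA′. Let X → Y → C --d--> ΣX be an Auslander-Reiten triangle in 𝒯, and suppose there exists an Auslander-Reiten triangle A → B → C → ΣA in 𝒞. Then there exists a morphism α : A → X which is a 𝒞-cover of X. -/
/-!
Let `d : C ⟶ X⟦1⟧` and `w : C ⟶ A⟦1⟧` be the connecting morphisms. As `B ⟶ C` is not a
retraction, it factors through `Y ⟶ C`, so `d` factors as `w ≫ a⟦1⟧` for some `a : A ⟶ X`.

Both connecting morphisms lie in the socle: for `A₂` in `S`, `d` factors through every non-zero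
morphism `A₂⟦1⟧ ⟶ X⟦1⟧`, and `w` through every non-zero morphism `C ⟶ A₂⟦1⟧`. Choosing a linear
form `l` with `l d ≠ 0`, the pairing `(χ, ψ) ↦ l (χ ≫ ψ)` between `C ⟶ A₂⟦1⟧` and
`A₂⟦1⟧ ⟶ X⟦1⟧` is therefore perfect, and no non-zero `χ` annihilates the morphisms factoring
through `a⟦1⟧`, which forces every morphism `A₂⟦1⟧ ⟶ X⟦1⟧` to factor through `a⟦1⟧`: `a` is a
precover. It is right minimal because an endomorphism `e` of `A` with `e ≫ a = a` that is not an
isomorphism is not a section (the endomorphism algebra is finite dimensional), so it factors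
through `A ⟶ B`, and then `d = w ≫ (e ≫ a)⟦1⟧ = 0`.
-/

open CategoryTheory CategoryTheory.Limits CategoryTheory.Pretriangulated

universe v u

variable {k : Type} [Field k]
variable {T : Type u} [Category.{v} T] [Preadditive T] [Linear k T]
  [HasZeroObject T] [HasShift T ℤ] [∀ n : ℤ, (shiftFunctor T n).Additive]
  [Pretriangulated T]

open Module

lemma Submodule.eq_top_of_forall_ne_zero_exists_apply_ne_zero {K U V : Type*} [Field K]
    [AddCommGroup U] [Module K U] [AddCommGroup V] [Module K V] [FiniteDimensional K U]
    (B : U →ₗ[K] V →ₗ[K] K) (hB : Function.Injective B.flip) (R : Submodule K V)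
    (hR : ∀ u ≠ 0, ∃ r ∈ R, B u r ≠ 0) : R = ⊤ := by
  have hB' : Function.Injective B := by
    refine (injective_iff_map_eq_zero B).2 fun u hu => ?_
    by_contra hu₀
    obtain ⟨r, -, hr⟩ := hR u hu₀
    exact hr (by simpa using LinearMap.congr_fun hu r)
  have := LinearMap.IsPerfPair.of_injective hB' hB
  rw [← Submodule.dualAnnihilator_eq_bot_iff, Submodule.eq_bot_iff]
  intro μ hμ
  rw [← B.apply_symm_toPerfPair_self μ] at hμ ⊢
  by_contra hμ₀
  obtain ⟨r, hr, hBr⟩ := hR (B.toPerfPair.symm μ) fun h => hμ₀ (by rw [h, map_zero])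
  exact hBr ((Submodule.mem_dualAnnihilator _).1 hμ r hr)

def IsExtensionClosed (S : Set T) : Prop :=
  ∀ {A B C : T} (f : A ⟶ B) (g : B ⟶ C) (h : C ⟶ A⟦(1 : ℤ)⟧),
    Triangle.mk f g h ∈ distTriang T → A ∈ S → C ∈ S → B ∈ S

lemma isIso_of_comp_eq_id_of_finiteDimensional {D : Type*} [Category D] [Preadditive D]
    [Linear k D] {A : D} [FiniteDimensional k (A ⟶ A)] {e r : A ⟶ A} (hr : e ≫ r = 𝟙 A) :
    IsIso e := by
  have : FiniteDimensional k (End A) := ‹_›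
  have := IsArtinianRing.of_finite k (End A)
  have hre : (show End A from r) * (show End A from e) = 1 := hr
  exact ⟨r, hr, mul_eq_one_comm.1 hre⟩

section Triangles

variable {X Y Z : T} {f : X ⟶ Y} {g : Y ⟶ Z} {h : Z ⟶ X⟦(1 : ℤ)⟧}

lemma mor₃_eq_zero_of_comp_mor₂_eq_id (hT : Triangle.mk f g h ∈ distTriang T) {ρ : Z ⟶ Y}
    (hρ : ρ ≫ g = 𝟙 Z) : h = 0 :=
  have : IsSplitEpi g := .mk' ⟨ρ, hρ⟩
  Triangle.mor₃_eq_zero_of_epi₂ _ hT (inferInstanceAs (Epi g))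

lemma mor₃_eq_zero_of_mor₁_comp_eq_id (hT : Triangle.mk f g h ∈ distTriang T) {q : Y ⟶ X}
    (hq : f ≫ q = 𝟙 X) : h = 0 :=
  have : IsSplitMono f := .mk' ⟨q, hq⟩
  Triangle.mor₃_eq_zero_of_mono₁ _ hT (inferInstanceAs (Mono f))

lemma exists_comp_eq_mor₃_of_ne_zero (hT : Triangle.mk f g h ∈ distTriang T)
    (hf : ∀ (X' : T) (u : X ⟶ X'), ¬(∃ v : X' ⟶ X, u ≫ v = 𝟙 X) → ∃ w : Y ⟶ X', f ≫ w = u)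
    {W : T} {ψ : W ⟶ X⟦(1 : ℤ)⟧} (hψ : ψ ≠ 0) : ∃ χ : Z ⟶ W, χ ≫ ψ = h := by
  obtain ⟨Y₀, f₀, g₀, hT₀⟩ := distinguished_cocone_triangle₂ ψ
  obtain ⟨e, he⟩ := hf Y₀ f₀ fun ⟨q, hq⟩ => hψ (mor₃_eq_zero_of_mor₁_comp_eq_id hT₀ hq)
  obtain ⟨χ, -, hχ⟩ := complete_distinguished_triangle_morphism _ _ hT hT₀ (𝟙 X) e
    (he.trans (Category.id_comp f₀).symm)
  change h ≫ (𝟙 X)⟦(1 : ℤ)⟧' = χ ≫ ψ at hχ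
  rw [CategoryTheory.Functor.map_id, Category.comp_id] at hχ
  exact ⟨χ, hχ.symm⟩

lemma exists_comp_eq_mor₃_of_ne_zero_of_mem {S : Set T} (hS : IsExtensionClosed S)
    (hT : Triangle.mk f g h ∈ distTriang T) (hZ : Z ∈ S)
    (hg : ∀ Z' : T, Z' ∈ S → ∀ u : Z' ⟶ Z,
      ¬(∃ v : Z ⟶ Z', v ≫ u = 𝟙 Z) → ∃ w : Z' ⟶ Y, w ≫ g = u)
    {W : T} (hW : W ∈ S) {χ : Z ⟶ W⟦(1 : ℤ)⟧} (hχ : χ ≠ 0) :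
    ∃ ψ : W⟦(1 : ℤ)⟧ ⟶ X⟦(1 : ℤ)⟧, χ ≫ ψ = h := by
  obtain ⟨P, q, p, hTP⟩ := distinguished_cocone_triangle₂ χ
  obtain ⟨e, he⟩ := hg P (hS q p χ hTP hW hZ) p
    fun ⟨ρ, hρ⟩ => hχ (mor₃_eq_zero_of_comp_mor₂_eq_id hTP hρ)
  obtain ⟨ψ, hψ, -⟩ := complete_distinguished_triangle_morphism _ _
    (rot_of_distTriang _ hTP) (rot_of_distTriang _ hT) e (𝟙 Z)
    ((Category.comp_id p).trans he.symm)
  change χ ≫ ψ = 𝟙 Z ≫ h at hψ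
  exact ⟨ψ, hψ.trans (Category.id_comp h)⟩

end Triangles

lemma exists_comp_eq_of_forall_ne_zero {D : Type*} [Category D] [Preadditive D] [Linear k D]
    {C W Z Z' : D} [FiniteDimensional k (C ⟶ W)]
    {d : C ⟶ Z} (hd : d ≠ 0) {w : C ⟶ Z'} {n : Z' ⟶ Z} (hn : w ≫ n = d)
    (h₁ : ∀ ψ : W ⟶ Z, ψ ≠ 0 → ∃ χ : C ⟶ W, χ ≫ ψ = d)
    (h₂ : ∀ χ : C ⟶ W, χ ≠ 0 → ∃ ψ : W ⟶ Z', χ ≫ ψ = w) (ψ : W ⟶ Z) :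
    ∃ t : W ⟶ Z', t ≫ n = ψ := by
  obtain ⟨l, hl⟩ : ∃ l : Dual k (C ⟶ Z), l d ≠ 0 := by
    by_contra! h
    exact hd ((forall_dual_apply_eq_zero_iff k d).1 h)
  let B := (Linear.comp C W Z).compr₂ l
  have hB : Function.Injective B.flip := by
    refine (injective_iff_map_eq_zero _).2 fun ψ hψ => ?_
    by_contra hψ₀
    obtain ⟨χ, hχ⟩ := h₁ ψ hψ₀
    exact hl (by simpa [B, hχ] using LinearMap.congr_fun hψ χ)
  have hR := Submodule.eq_top_of_forall_ne_zero_exists_apply_ne_zero B hB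
    (LinearMap.range (Linear.rightComp k W n)) fun χ hχ => by
      obtain ⟨ψ, hψ⟩ := h₂ χ hχ
      refine ⟨ψ ≫ n, LinearMap.mem_range_self _ ψ, ?_⟩
      change l (χ ≫ ψ ≫ n) ≠ 0
      rwa [← Category.assoc, hψ, hn]
  exact (LinearMap.range_eq_top.1 hR) ψ

variable {A B C X Y : T} {u : A ⟶ B} {v : B ⟶ C} {w : C ⟶ A⟦(1 : ℤ)⟧}
  {f : X ⟶ Y} {g : Y ⟶ C} {d : C ⟶ X⟦(1 : ℤ)⟧}

lemma mor₂_comp_eq_zero_of_isARTriangle {S : Set T} (hAR : IsARTriangle f g d)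
    (hARC : IsARTriangleIn S u v w) : v ≫ d = 0 := by
  obtain ⟨b, rfl⟩ := hAR.2.2.2 B v fun ⟨ρ, hρ⟩ =>
    hARC.2.2.2.2.1 (mor₃_eq_zero_of_comp_mor₂_eq_id hARC.2.2.2.1 hρ)
  rw [Category.assoc]
  exact (congrArg (b ≫ ·) (comp_distTriang_mor_zero₂₃ _ hAR.1)).trans comp_zero

lemma exists_comp_shift_map_eq (hT : Triangle.mk u v w ∈ distTriang T) (hvd : v ≫ d = 0) :
    ∃ a : A ⟶ X, w ≫ a⟦(1 : ℤ)⟧' = d := by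
  obtain ⟨n, hn⟩ := Triangle.yoneda_exact₃ _ hT d hvd
  obtain ⟨a, rfl⟩ := (shiftFunctor T (1 : ℤ)).map_surjective n
  exact ⟨a, hn.symm⟩

lemma isPrecover_of_comp_shift_eq {S : Set T} (hS : IsExtensionClosed S)
    (hfd : ∀ X Y : T, FiniteDimensional k (X ⟶ Y)) (hAR : IsARTriangle f g d)
    (hARC : IsARTriangleIn S u v w) {a : A ⟶ X} (ha : w ≫ a⟦(1 : ℤ)⟧' = d) :
    IsPrecover S a := by
  obtain ⟨hT₁, hd, hf, -⟩ := hAR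
  obtain ⟨hA, -, hC, hT₂, -, -, hv⟩ := hARC
  refine ⟨hA, fun A₂ hA₂ φ => ?_⟩
  obtain ⟨t, ht⟩ := exists_comp_eq_of_forall_ne_zero (k := k) hd ha
    (fun ψ hψ => exists_comp_eq_mor₃_of_ne_zero hT₁ hf hψ)
    (fun χ hχ => exists_comp_eq_mor₃_of_ne_zero_of_mem hS hT₂ hC hv hA₂ hχ) (φ⟦(1 : ℤ)⟧')
  obtain ⟨t, rfl⟩ := (shiftFunctor T (1 : ℤ)).map_surjective t
  exact ⟨t, (shiftFunctor T (1 : ℤ)).map_injective (by simpa using ht)⟩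

lemma isIso_of_comp_eq_self {S : Set T} [FiniteDimensional k (A ⟶ A)]
    (hARC : IsARTriangleIn S u v w) {a : A ⟶ X} (ha : w ≫ a⟦(1 : ℤ)⟧' ≠ 0) {e : A ⟶ A}
    (he : e ≫ a = a) : IsIso e := by
  obtain ⟨hA, -, -, hT, -, hu, -⟩ := hARC
  by_contra hne
  obtain ⟨e', rfl⟩ := hu A hA e fun ⟨r, hr⟩ =>
    hne (isIso_of_comp_eq_id_of_finiteDimensional (k := k) hr)
  apply ha
  have hwu : w ≫ u⟦(1 : ℤ)⟧' = 0 := comp_distTriang_mor_zero₃₁ _ hT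
  rw [← he, CategoryTheory.Functor.map_comp, CategoryTheory.Functor.map_comp, ← Category.assoc,
    ← Category.assoc, hwu, zero_comp, zero_comp]

theorem cover_of_AR_triangle_in_subcategory_general (S : Set T)
    (hfd : ∀ X Y : T, FiniteDimensional k (X ⟶ Y))
    (hext : ∀ {A B C : T} (f : A ⟶ B) (g : B ⟶ C) (h : C ⟶ A⟦(1 : ℤ)⟧),
      Triangle.mk f g h ∈ (distTriang T) → A ∈ S → C ∈ S → B ∈ S)
    {C : T}
    {X Y : T} (f : X ⟶ Y) (g : Y ⟶ C) (d : C ⟶ X⟦(1 : ℤ)⟧)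
    (hAR : IsARTriangle f g d)
    {A : T}
    (hARC : ∃ (B : T) (u : A ⟶ B) (v : B ⟶ C) (w : C ⟶ A⟦(1 : ℤ)⟧),
      IsARTriangleIn S u v w) :
    ∃ α : A ⟶ X, IsCover S α := by
  obtain ⟨B, u, v, w, hARC⟩ := hARC
  obtain ⟨a, ha⟩ :=
    exists_comp_shift_map_eq hARC.2.2.2.1 (mor₂_comp_eq_zero_of_isARTriangle hAR hARC)
  have := hfd A A
  exact ⟨a, isPrecover_of_comp_shift_eq hext hfd hAR hARC ha,
    fun e he => isIso_of_comp_eq_self (k := k) hARC (ha ▸ hAR.2.1) he⟩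

/-- Main theorem, (ii) ⟹ (i): if `C ∈ S` admits a non-zero morphism to a shift of an
object of `S`, `X ⟶ Y ⟶ C --d--> ΣX` is an Auslander-Reiten triangle in `T`, and there
is an Auslander-Reiten triangle `A ⟶ B ⟶ C ⟶ ΣA` in the subcategory `S`, then there is
an `S`-cover `α : A ⟶ X`. -/
theorem cover_of_AR_triangle_in_subcategory (S : Set T)
    [EssentiallySmall.{v} T] [IsIdempotentComplete T]
    (hfd : ∀ X Y : T, FiniteDimensional k (X ⟶ Y))
    (hiso : ∀ {X Y : T}, (X ≅ Y) → X ∈ S → Y ∈ S)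
    (hext : ∀ {A B C : T} (f : A ⟶ B) (g : B ⟶ C) (h : C ⟶ A⟦(1 : ℤ)⟧),
      Triangle.mk f g h ∈ (distTriang T) → A ∈ S → C ∈ S → B ∈ S)
    (hsum : ∀ {A A₁ : T} (i : A₁ ⟶ A) (p : A ⟶ A₁), i ≫ p = 𝟙 A₁ → A ∈ S → A₁ ∈ S)
    {C A' : T} (hC : C ∈ S) (hA' : A' ∈ S)
    (c : C ⟶ A'⟦(1 : ℤ)⟧) (hc : c ≠ 0)
    {X Y : T} (f : X ⟶ Y) (g : Y ⟶ C) (d : C ⟶ X⟦(1 : ℤ)⟧)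
    (hAR : IsARTriangle f g d)
    {A : T}
    (hARC : ∃ (B : T) (u : A ⟶ B) (v : B ⟶ C) (w : C ⟶ A⟦(1 : ℤ)⟧),
      IsARTriangleIn S u v w) :
    ∃ α : A ⟶ X, IsCover S α :=
  cover_of_AR_triangle_in_subcategory_general S hfd hext f g d hAR hARC
end

section
/- Let X be a ℤ-indexed cochain complex of injective Λ-left-modules each of whose components Xⁱ is finitely generated. Then X admits a 𝒞-precover in K(Λ): there exist a complex A in 𝒞 and a morphism α : A → X in K(Λ) such that every morphism A′ → X in K(Λ) with A′ in 𝒞 factors through α. (Concretely, one may take A to be an injective resolution of Ker(∂⁰_X) together with the canonical chain map A → X.) -/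
/-!
Take for `A` an injective resolution of the cycles `Z⁰(X) = Ker ∂⁰_X`, viewed as a `ℤ`-indexed
complex. Everything rests on the comparison theorem: if `B` vanishes in negative degrees and is
exact in positive degrees, and `Y` is any complex of injectives, then every morphism
`Z⁰(B) ⟶ Z⁰(Y)` is induced by a chain map `B ⟶ Y`, and two chain maps inducing the same morphism
are homotopic. With `Y = X` this produces `α`; for `f : A' ⟶ X` with `A'` in `𝒞` it lifts
`Z⁰(A') ⟶ Z⁰(X) ≅ Z⁰(A)` to `g : A' ⟶ A`, and `g ≫ α` and `f` induce the same map on `Z⁰`, hence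
are homotopic. `H⁰(A) ≅ Z⁰(X) ⊆ X⁰` is finitely generated because `Λ` is noetherian.
-/

open CategoryTheory CategoryTheory.Limits

variable (Λ : Type) [Ring Λ]

/-- A cochain complex of `Λ`-modules lies in the subcategory `𝒞` if it is a complex of
injective modules concentrated in non-negative degrees whose only non-zero cohomology is
`H⁰`, which is finitely generated; i.e. it is an injective resolution of a finitely
generated `Λ`-module. -/
def MemC (A : CochainComplex (ModuleCat.{0} Λ) ℤ) : Prop :=
  (∀ i : ℤ, Injective (A.X i)) ∧ (∀ i : ℤ, i < 0 → IsZero (A.X i)) ∧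
  (∀ i : ℤ, i ≠ 0 → IsZero (A.homology i)) ∧ Module.Finite Λ (A.homology 0)

namespace CochainComplex

open HomologicalComplex HomComplex

variable {C : Type*} [Category C] [Abelian C] {B Y : CochainComplex C ℤ}

lemma exact_iCycles_d (B : CochainComplex C ℤ) (i j : ℤ) (hij : i + 1 = j) :
    (ShortComplex.mk (B.iCycles i) (B.d i j) (B.iCycles_d _ _)).Exact :=
  ShortComplex.exact_of_f_is_kernel _ (B.cyclesIsKernel i j (by simpa using hij))

section

variable [B.IsStrictlyGE 0]

noncomputable def homOfRestrictionUpNat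
    (φ : B.restriction ComplexShape.embeddingUpNat ⟶ Y.restriction ComplexShape.embeddingUpNat) :
    B ⟶ Y where
  f
    | Int.ofNat n => φ.f n
    | Int.negSucc _ => 0
  comm' i j hij := by
    obtain rfl : j = i + 1 := hij.symm
    match i with
    | Int.ofNat n => exact φ.comm n (n + 1)
    | Int.negSucc n => exact (B.isZero_of_isStrictlyGE 0 _ (Int.negSucc_lt_zero n)).eq_of_src _ _

variable (hB : ∀ i : ℤ, 0 < i → B.ExactAt i) [∀ i, Injective (Y.X i)]
include hB

open Cochain.InductionUp in
lemma nonempty_homotopy_zero_of_iCycles_comp_f_zero (φ : B ⟶ Y)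
    (hφ : B.iCycles 0 ≫ φ.f 0 = 0) : Nonempty (Homotopy φ 0) := by
  have hex := B.exact_iCycles_d 0 1 rfl
  -- Refine a `(-1)`-cochain degree by degree as in `isKInjective_of_injective`, starting from a
  -- solution in degree `0` provided by the exactness of `Z⁰(B) ⟶ B⁰ ⟶ B¹`.
  let X (n : ℕ) : Set (Cochain B Y (-1)) :=
    Set.ofPred (fun α => (δ (-1) 0 α).EqUpTo (Cochain.ofHom φ) n)
  let s₀ : B.X 1 ⟶ Y.X 0 := hex.descToInjective (φ.f 0) hφ
  have hs₀ : B.d 0 1 ≫ s₀ = φ.f 0 := hex.comp_descToInjective _ _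
  let x₀ : X 0 := ⟨Cochain.single s₀ (-1), fun p q hpq (hp : p ≤ 0) => by
    obtain rfl : p = q := by lia
    obtain hp | rfl := hp.lt_or_eq
    · exact (B.isZero_of_isStrictlyGE 0 p hp).eq_of_src _ _
    · rw [δ_v (-1) 0 (neg_add_cancel 1) _ 0 0 rfl (-1) 1 rfl rfl,
        Cochain.single_v_eq_zero _ _ _ _ _ (by lia), Cochain.single_v]
      simp [hs₀]⟩
  let step (n : ℕ) (α : X n) : X (n + 1) :=
    ⟨_, (isKInjective_of_injective_aux φ α.1 n (n + 1 : ℕ) (by lia) (hB _ (by lia))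
      α.2).choose_spec⟩
  have hstep (n : ℕ) (α : X n) : (step n α).1.EqUpTo α.1 (1 + n) := fun p q hpq hp => by
    dsimp [step]
    rw [add_eq_left, Cochain.single_v_eq_zero _ _ _ _ _ (by lia)]
  refine ⟨(Cochain.equivHomotopy φ 0).symm ⟨limitSequence step hstep x₀, ?_⟩⟩
  rw [Cochain.ofHom_zero, add_zero]
  ext n
  let k := n.toNat
  rw [← (sequence step x₀ k).2 n n (add_zero n) (by lia),
    δ_v (-1) 0 (neg_add_cancel 1) _ n n (by lia) (n - 1) (n + 1) rfl (by lia),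
    δ_v (-1) 0 (neg_add_cancel 1) _ n n (by lia) (n - 1) (n + 1) rfl (by lia),
    limitSequence_eqUpTo step hstep x₀ k n (n - 1) (by lia) (by lia),
    limitSequence_eqUpTo step hstep x₀ k (n + 1) n (by lia) (by lia)]

lemma exists_hom_cyclesMap_eq (u : B.cycles 0 ⟶ Y.cycles 0) :
    ∃ φ : B ⟶ Y, cyclesMap φ 0 = u := by
  have hex := B.exact_iCycles_d 0 1 rfl
  have hexSucc (n : ℕ) : (ShortComplex.mk (B.d n (n + 1 : ℕ)) (B.d (n + 1 : ℕ) (n + 2 : ℕ))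
      (B.d_comp_d _ _ _)).Exact :=
    (B.exactAt_iff' n (n + 1 : ℕ) (n + 2 : ℕ) (by simp) (by simp; lia)).mp (hB _ (by lia))
  let φ₀ : B.X 0 ⟶ Y.X 0 := Injective.factorThru (u ≫ Y.iCycles 0) (B.iCycles 0)
  have hφ₀ : B.iCycles 0 ≫ φ₀ = u ≫ Y.iCycles 0 := Injective.comp_factorThru _ _
  have hφ₀d : B.iCycles 0 ≫ φ₀ ≫ Y.d 0 1 = 0 := by
    rw [reassoc_of% hφ₀, iCycles_d, comp_zero]
  let φ₁ := hex.descToInjective (φ₀ ≫ Y.d 0 1) hφ₀d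
  let P := B.restriction ComplexShape.embeddingUpNat
  let Q := Y.restriction ComplexShape.embeddingUpNat
  have (n : ℕ) : Injective (Q.X n) := inferInstanceAs (Injective (Y.X n))
  let φ := mkHom P Q φ₀ φ₁ (hex.comp_descToInjective _ _).symm fun n p =>
    ⟨(hexSucc n).descToInjective (p.2.1 ≫ Q.d _ _) (by
        have h : P.d n (n + 1) ≫ p.2.1 ≫ Q.d (n + 1) (n + 2) = 0 := by
          rw [← reassoc_of% p.2.2, d_comp_d, comp_zero]
        exact h),
      ((hexSucc n).comp_descToInjective _ _).symm⟩
  refine ⟨homOfRestrictionUpNat φ, ?_⟩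
  rw [← cancel_mono (Y.iCycles 0), cyclesMap_i]
  exact hφ₀

lemma quotient_map_eq_of_cyclesMap_eq {φ ψ : B ⟶ Y} (h : cyclesMap φ 0 = cyclesMap ψ 0) :
    (HomotopyCategory.quotient C (.up ℤ)).map φ = (HomotopyCategory.quotient C (.up ℤ)).map ψ := by
  obtain ⟨H⟩ := nonempty_homotopy_zero_of_iCycles_comp_f_zero hB (φ - ψ) (by
    rw [sub_f_apply, Preadditive.comp_sub, ← cyclesMap_i, ← cyclesMap_i, h, sub_self])
  exact HomotopyCategory.eq_of_homotopy _ _ (Homotopy.equivSubZero.symm H)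

end

end CochainComplex

namespace CategoryTheory.InjectiveResolution

variable {C : Type*} [Category C] [Abelian C] {Z : C} (R : InjectiveResolution Z)

lemma cochainComplex_exactAt (i : ℤ) (hi : i ≠ 0) : R.cochainComplex.ExactAt i := by
  rcases hi.lt_or_gt with hi | hi
  · exact R.cochainComplex.exactAt_of_isGE 0 i hi
  · exact R.cochainComplex.exactAt_of_isLE 0 i hi

noncomputable def cochainComplexHomologyZeroIso : R.cochainComplex.homology 0 ≅ Z :=
  (isoOfQuasiIsoAt R.ι' 0).symm ≪≫
    HomologicalComplex.singleObjHomologySelfIso _ _ _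

noncomputable def cochainComplexCyclesZeroIso : R.cochainComplex.cycles 0 ≅ Z :=
  R.cochainComplex.isoHomologyπ (-1) 0 (by simp)
    ((R.cochainComplex.isZero_of_isStrictlyGE 0 (-1)).eq_of_src _ _) ≪≫
  R.cochainComplexHomologyZeroIso

end CategoryTheory.InjectiveResolution

section

variable {Λ}

lemma MemC.isStrictlyGE {A : CochainComplex (ModuleCat.{0} Λ) ℤ} (hA : MemC Λ A) :
    A.IsStrictlyGE 0 :=
  (A.isStrictlyGE_iff 0).mpr hA.2.1

lemma MemC.exactAt {A : CochainComplex (ModuleCat.{0} Λ) ℤ} (hA : MemC Λ A) (i : ℤ)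
    (hi : i ≠ 0) : A.ExactAt i :=
  (A.exactAt_iff_isZero_homology i).mpr (hA.2.2.1 i hi)

lemma memC_cochainComplex {M : ModuleCat.{0} Λ} [Module.Finite Λ M] (R : InjectiveResolution M) :
    MemC Λ R.cochainComplex :=
  ⟨inferInstance, fun i hi => R.cochainComplex.isZero_of_isStrictlyGE 0 i hi,
    fun i hi => (R.cochainComplex_exactAt i hi).isZero_homology,
    Module.Finite.equiv R.cochainComplexHomologyZeroIso.symm.toLinearEquiv⟩

end

/-- Every complex `X` of finitely generated injective `Λ`-modules admits a `𝒞`-precover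
in the homotopy category `K(Λ)`: there are `A` in `𝒞` and `α : A ⟶ X` in `K(Λ)` such
that every morphism `A' ⟶ X` in `K(Λ)` with `A'` in `𝒞` factors through `α`. -/
theorem exists_C_precover (k : Type) [Field k] [Algebra k Λ] [FiniteDimensional k Λ]
    (X : CochainComplex (ModuleCat.{0} Λ) ℤ)
    (hinj : ∀ i : ℤ, Injective (X.X i))
    (hfg : ∀ i : ℤ, Module.Finite Λ (X.X i)) :
    ∃ A : CochainComplex (ModuleCat.{0} Λ) ℤ, MemC Λ A ∧
      ∃ α : (HomotopyCategory.quotient (ModuleCat.{0} Λ) (ComplexShape.up ℤ)).obj A ⟶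
            (HomotopyCategory.quotient (ModuleCat.{0} Λ) (ComplexShape.up ℤ)).obj X,
        ∀ A' : CochainComplex (ModuleCat.{0} Λ) ℤ, MemC Λ A' →
          ∀ f : (HomotopyCategory.quotient (ModuleCat.{0} Λ) (ComplexShape.up ℤ)).obj A' ⟶
                (HomotopyCategory.quotient (ModuleCat.{0} Λ) (ComplexShape.up ℤ)).obj X,
            ∃ g, g ≫ α = f := by
  have : IsNoetherianRing Λ := isNoetherian_of_tower k inferInstance
  have : Module.Finite Λ (X.cycles 0) := Module.Finite.of_injective (X.iCycles 0).hom
    ((ModuleCat.mono_iff_injective _).mp inferInstance)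
  let R := InjectiveResolution.of (X.cycles 0)
  let e := R.cochainComplexCyclesZeroIso
  obtain ⟨α, hα⟩ := CochainComplex.exists_hom_cyclesMap_eq
    (fun i hi => R.cochainComplex_exactAt i hi.ne') e.hom
  refine ⟨R.cochainComplex, memC_cochainComplex R, (HomotopyCategory.quotient _ _).map α,
    fun A' hA' f => ?_⟩
  obtain ⟨f, rfl⟩ := (HomotopyCategory.quotient _ _).map_surjective f
  have := hA'.isStrictlyGE
  obtain ⟨g, hg⟩ := CochainComplex.exists_hom_cyclesMap_eq
    (fun i hi => hA'.exactAt i hi.ne') (HomologicalComplex.cyclesMap f 0 ≫ e.inv)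
  refine ⟨(HomotopyCategory.quotient _ _).map g, ?_⟩
  rw [← Functor.map_comp]
  exact CochainComplex.quotient_map_eq_of_cyclesMap_eq (fun i hi => hA'.exactAt i hi.ne')
    (by simp [HomologicalComplex.cyclesMap_comp, hg, hα])
end

section
/- Let X and Y be ℤ-indexed cochain complexes of injective Λ-left-modules such that each component Xⁱ and Yⁱ is finitely generated, Xⁱ = 0 and Yⁱ = 0 for all i sufficiently small, and Hⁱ(X) = 0 and Hⁱ(Y) = 0 for all i sufficiently large. Then Hom_{K(Λ)}(X, Y), the k-vector space of homotopy classes of chain maps from X to Y, is finite-dimensional over k. -/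
open CategoryTheory CategoryTheory.Limits

/-!
A bounded below complex of injectives `Y` is K-injective, so a homotopy class of maps into `Y`
is detected after precomposing with any quasi-isomorphism. If `X` has no cohomology above
degree `b`, the canonical truncation `τ_{≤ b} X ⟶ X` is one, hence a chain map `X ⟶ Y`
vanishing in degrees `≤ b` is null-homotopic. Since `X` also vanishes below some degree `a`,
the homotopy class of a chain map is thus determined by its components in degrees `a, …, b`,
each lying in the finite-dimensional space `Hom_Λ(Xⁱ, Yⁱ)`.
-/

theorem Module.Finite.of_surjective_of_ker_le {R M N P : Type*} [Ring R]
    [AddCommGroup M] [AddCommGroup N] [AddCommGroup P] [Module R M] [Module R N] [Module R P]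
    [IsNoetherian R P] (q : M →ₗ[R] N) (hq : Function.Surjective q) (Φ : M →ₗ[R] P)
    (h : LinearMap.ker Φ ≤ LinearMap.ker q) : Module.Finite R N :=
  have : Module.Finite R (M ⧸ LinearMap.ker Φ) := .equiv Φ.quotKerEquivRange.symm
  .of_surjective (Submodule.liftQ _ q h) (by
    intro n
    obtain ⟨m, rfl⟩ := hq n
    exact ⟨Submodule.Quotient.mk m, rfl⟩)

open scoped ModuleCat in
theorem ModuleCat.finite_hom (k : Type*) [Field k] {Λ : Type*} [Ring Λ] [Algebra k Λ]
    [Module.Finite k Λ] (M N : ModuleCat Λ) [Module.Finite Λ M] [Module.Finite Λ N] :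
    Module.Finite k (M ⟶ N) :=
  have : Module.Finite k M := .trans Λ M
  have : Module.Finite k N := .trans Λ N
  .of_injective ((LinearMap.restrictScalarsₗ k Λ M N k).comp
    (ModuleCat.homLinearEquiv (S := k)).toLinearMap)
    ((LinearMap.restrictScalars_injective k).comp ModuleCat.homLinearEquiv.injective)

namespace CochainComplex

variable {C : Type*} [Category C] [Abelian C]

lemma IsKInjective.quotient_map_eq_zero_of_quasiIso_comp_eq_zero {K' K L : CochainComplex C ℤ}
    [L.IsKInjective] (s : K' ⟶ K) [QuasiIso s] (f : K ⟶ L) (hf : s ≫ f = 0) :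
    (HomotopyCategory.quotient C (.up ℤ)).map f = 0 := by
  let := HasDerivedCategory.standard C
  let Qs := DerivedCategory.Qh.map ((HomotopyCategory.quotient C (.up ℤ)).map s)
  have : IsIso Qs :=
    (NatIso.isIso_map_iff (DerivedCategory.quotientCompQhIso C) s).2 inferInstance
  apply (IsKInjective.Qh_map_bijective _ L).injective
  rw [Functor.map_zero, ← cancel_epi Qs, ← Functor.map_comp, ← Functor.map_comp, hf]
  simp

lemma IsKInjective.quotient_map_eq_zero_of_f_eq_zero {K L : CochainComplex C ℤ} [L.IsKInjective]
    (n : ℤ) [K.IsLE n] (f : K ⟶ L) (hf : ∀ i ≤ n, f.f i = 0) :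
    (HomotopyCategory.quotient C (.up ℤ)).map f = 0 := by
  have : QuasiIso (K.ιTruncLE n) := (K.quasiIso_ιTruncLE_iff_isSupported _).2 ‹_›
  refine quotient_map_eq_zero_of_quasiIso_comp_eq_zero (K.ιTruncLE n) f ?_
  ext i : 1
  by_cases hi : i ≤ n
  · simp [hf i hi]
  · exact (K.truncLE n).isZero_of_isStrictlyLE n i (by omega) |>.eq_of_src _ _

lemma IsKInjective.finite_hom_quotient_obj {R : Type*} [CommRing R] [IsNoetherianRing R]
    [Linear R C] (K L : CochainComplex C ℤ) [L.IsKInjective] (a b : ℤ) [K.IsStrictlyGE a]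
    [K.IsLE b] [∀ i, Module.Finite R (K.X i ⟶ L.X i)] :
    Module.Finite R ((HomotopyCategory.quotient C (.up ℤ)).obj K ⟶
      (HomotopyCategory.quotient C (.up ℤ)).obj L) := by
  let Φ : (K ⟶ L) →ₗ[R] ((i : Finset.Icc a b) → (K.X i ⟶ L.X i)) :=
    { toFun f i := f.f i
      map_add' _ _ := rfl
      map_smul' _ _ := rfl }
  refine .of_surjective_of_ker_le ((HomotopyCategory.quotient C _).mapLinearMap R)
    (HomotopyCategory.quotient C _).map_surjective Φ fun f hf ↦ ?_
  refine quotient_map_eq_zero_of_f_eq_zero b f fun i hib ↦ ?_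
  by_cases hai : a ≤ i
  · exact congrFun hf ⟨i, Finset.mem_Icc.2 ⟨hai, hib⟩⟩
  · exact (K.isZero_of_isStrictlyGE a i (by omega)).eq_of_src _ _

end CochainComplex

theorem hom_finiteDimensional_general (k : Type) [Field k] (Λ : Type) [Ring Λ] [Algebra k Λ]
    [FiniteDimensional k Λ]
    (X Y : CochainComplex (ModuleCat.{0} Λ) ℤ)
    (hYinj : ∀ i : ℤ, Injective (Y.X i))
    (hXfg : ∀ i : ℤ, Module.Finite Λ (X.X i)) (hYfg : ∀ i : ℤ, Module.Finite Λ (Y.X i))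
    (hXbd : ∃ n : ℤ, ∀ i : ℤ, i < n → IsZero (X.X i))
    (hYbd : ∃ n : ℤ, ∀ i : ℤ, i < n → IsZero (Y.X i))
    (hXcoh : ∃ n : ℤ, ∀ i : ℤ, n < i → IsZero (X.homology i)) :
    FiniteDimensional k
      ((HomotopyCategory.quotient (ModuleCat.{0} Λ) (ComplexShape.up ℤ)).obj X ⟶
       (HomotopyCategory.quotient (ModuleCat.{0} Λ) (ComplexShape.up ℤ)).obj Y) := by
  obtain ⟨a, ha⟩ := hXbd
  obtain ⟨b, hb⟩ := hXcoh
  obtain ⟨c, hc⟩ := hYbd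
  have : X.IsStrictlyGE a := (X.isStrictlyGE_iff a).2 ha
  have : X.IsLE b := (X.isLE_iff b).2 fun i hi ↦ (X.exactAt_iff_isZero_homology i).2 (hb i hi)
  have : Y.IsStrictlyGE c := (Y.isStrictlyGE_iff c).2 hc
  have : ∀ i, Injective (Y.X i) := hYinj
  have : Y.IsKInjective := Y.isKInjective_of_injective c
  have : ∀ i, Module.Finite k (X.X i ⟶ Y.X i) := fun i ↦ ModuleCat.finite_hom k _ _
  exact CochainComplex.IsKInjective.finite_hom_quotient_obj X Y a b

/-- Let `X` and `Y` be cochain complexes of finitely generated injective `Λ`-modules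
which are bounded to the left (zero components in sufficiently low degrees) and have
right-bounded cohomology (zero cohomology in sufficiently high degrees).  Then the space
`Hom_{K(Λ)}(X, Y)` of homotopy classes of chain maps is a finite-dimensional
`k`-vector space. -/
theorem hom_finiteDimensional (k : Type) [Field k] (Λ : Type) [Ring Λ] [Algebra k Λ]
    [FiniteDimensional k Λ]
    (X Y : CochainComplex (ModuleCat.{0} Λ) ℤ)
    (hXinj : ∀ i : ℤ, Injective (X.X i)) (hYinj : ∀ i : ℤ, Injective (Y.X i))
    (hXfg : ∀ i : ℤ, Module.Finite Λ (X.X i)) (hYfg : ∀ i : ℤ, Module.Finite Λ (Y.X i))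
    (hXbd : ∃ n : ℤ, ∀ i : ℤ, i < n → IsZero (X.X i))
    (hYbd : ∃ n : ℤ, ∀ i : ℤ, i < n → IsZero (Y.X i))
    (hXcoh : ∃ n : ℤ, ∀ i : ℤ, n < i → IsZero (X.homology i))
    (hYcoh : ∃ n : ℤ, ∀ i : ℤ, n < i → IsZero (Y.homology i)) :
    FiniteDimensional k
      ((HomotopyCategory.quotient (ModuleCat.{0} Λ) (ComplexShape.up ℤ)).obj X ⟶
       (HomotopyCategory.quotient (ModuleCat.{0} Λ) (ComplexShape.up ℤ)).obj Y) :=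
  hom_finiteDimensional_general k Λ X Y hYinj hXfg hYfg hXbd hYbd hXcoh
end
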